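/- arXiv:2409.04076 — 2 statements merged into one kernel-verified Lean document; each statement's English description precedes it below -/
import Mathlib

section
/- Let 1 ≤ m_1 < … < m_e be indices and Z = {1} ∪ {2m_i, 2m_i+1 : 1 ≤ i ≤ e}. If {M_0, M_1, …, M_e} is a Temperley–Lieb pattern of Z, then every two-element block M_i (1 ≤ i ≤ e) contains exactly one even element and one odd element. -/
/-- `P` is a partition of the finite set `Z ⊆ ℕ` into nonempty blocks. -/
def IsPartitionOf (Z : Finset ℕ) (P : Finset (Finset ℕ)) : Prop :=
  (∀ L ∈ P, L.Nonempty) ∧ (∀ L ∈ P, L ⊆ Z) ∧ ∀ b ∈ Z, ∃! L, L ∈ P ∧ b ∈ L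

/-- The noncrossing condition on the blocks (intervals spanned by pairs of elements of
distinct blocks are disjoint or nested). -/
def PairwiseNoncrossing (P : Finset (Finset ℕ)) : Prop :=
  ∀ L ∈ P, ∀ L' ∈ P, L ≠ L' →
    ∀ a ∈ L, ∀ b ∈ L, ∀ c ∈ L', ∀ d ∈ L', a ≤ b → c ≤ d →
      Finset.Icc a b ∩ Finset.Icc c d = ∅ ∨
      Finset.Icc a b ⊆ Finset.Icc c d ∨ Finset.Icc c d ⊆ Finset.Icc a b

/-- A Temperley–Lieb pattern of `Z`: a partition of `Z` with exactly one singleton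
block `{d}`, `d` odd; every other block is a pair `{a, b}`, `a < b`, with
`(a − d)(b − d) > 0` (i.e. `b < d` or `d < a`); and the spanned intervals of distinct
blocks are disjoint or nested. -/
def IsTLPattern (Z : Finset ℕ) (σ : Finset (Finset ℕ)) : Prop :=
  IsPartitionOf Z σ ∧ PairwiseNoncrossing σ ∧
  ∃ M0 ∈ σ, ∃ d, Odd d ∧ M0 = ({d} : Finset ℕ) ∧
    ∀ M ∈ σ, M ≠ M0 → ∃ a b, a < b ∧ M = ({a, b} : Finset ℕ) ∧ (b < d ∨ d < a)

/-- In a Temperley–Lieb pattern of `Z = {1} ∪ {2mᵢ, 2mᵢ+1}`, every two-element block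
contains exactly one even and one odd element. -/
theorem stmt11 (F : Finset ℕ) (hF : ∀ m ∈ F, 1 ≤ m)
    (σ : Finset (Finset ℕ))
    (hσ : IsTLPattern (insert 1 (F.biUnion (fun m => ({2 * m, 2 * m + 1} : Finset ℕ)))) σ) :
    ∀ M ∈ σ, M.card = 2 → ∃ a b, Even a ∧ Odd b ∧ M = ({a, b} : Finset ℕ) := by
  set Z : Finset ℕ := insert 1 (F.biUnion (fun m => ({2 * m, 2 * m + 1} : Finset ℕ))) with hZdef
  obtain ⟨⟨hne, hsub, huniq⟩, hnc, M0, hM0σ, d, hdodd, hM0eq, hpairs⟩ := hσ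
  have hZmem : ∀ z ∈ Z, z = 1 ∨ ∃ m ∈ F, z = 2 * m ∨ z = 2 * m + 1 := by
    intro z hz
    simpa [hZdef, Finset.mem_insert, Finset.mem_biUnion] using hz
  have hZone : ∀ z ∈ Z, 1 ≤ z := by
    intro z hz
    rcases hZmem z hz with h | ⟨m, hm, h⟩
    · omega
    · have := hF m hm; omega
  have hblock : ∀ c ∈ Z, ∀ L ∈ σ, ∀ L' ∈ σ, c ∈ L → c ∈ L' → L = L' := by
    intro c hc L hL L' hL' h1 h2
    obtain ⟨K, -, hK⟩ := huniq c hc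
    rw [hK L ⟨hL, h1⟩, hK L' ⟨hL', h2⟩]
  intro M hMσ hMcard
  have hMne : M ≠ M0 := by
    intro h; rw [h, hM0eq] at hMcard; simp at hMcard
  obtain ⟨a, b, hab, hMeq, hside⟩ := hpairs M hMσ hMne
  have haM : a ∈ M := by rw [hMeq]; simp
  have hbM : b ∈ M := by rw [hMeq]; simp
  have haZ : a ∈ Z := hsub M hMσ haM
  have hbZ : b ∈ Z := hsub M hMσ hbM
  have ha1 : 1 ≤ a := hZone a haZ
  have hkey : ¬ (a % 2 = b % 2) := by
    intro hpar
    set S : Finset ℕ := Z ∩ Finset.Ioo a b with hSdef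
    -- S has even cardinality: it splits into the blocks nested inside (a,b)
    have heven : S.card % 2 = 0 := by
      classical
      set T : Finset (Finset ℕ) := σ.filter (fun L => L ⊆ Finset.Ioo a b) with hTdef
      have hST : S = T.biUnion (fun L => L) := by
        ext c
        simp only [hSdef, Finset.mem_inter, Finset.mem_biUnion, hTdef, Finset.mem_filter]
        constructor
        · rintro ⟨hcZ, hcIoo⟩
          have hcIoo' := Finset.mem_Ioo.mp hcIoo
          obtain ⟨L, ⟨hLσ, hcL⟩, -⟩ := huniq c hcZ
          refine ⟨L, ⟨hLσ, ?_⟩, hcL⟩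
          have hLM : L ≠ M := by
            intro h; rw [h, hMeq] at hcL
            simp only [Finset.mem_insert, Finset.mem_singleton] at hcL
            omega
          have hLM0 : L ≠ M0 := by
            intro h; rw [h, hM0eq] at hcL
            simp only [Finset.mem_singleton] at hcL
            omega
          obtain ⟨x, y, hxy, hLeq, -⟩ := hpairs L hLσ hLM0
          have hxL : x ∈ L := by rw [hLeq]; simp
          have hyL : y ∈ L := by rw [hLeq]; simp
          have hcxy : c = x ∨ c = y := by rw [hLeq] at hcL; simpa using hcL
          rcases hnc M hMσ L hLσ (Ne.symm hLM) a haM b hbM x hxL y hyL hab.le hxy.le with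
            h | h | h
          · exfalso
            have : c ∈ Finset.Icc a b ∩ Finset.Icc x y := by
              rw [Finset.mem_inter, Finset.mem_Icc, Finset.mem_Icc]; omega
            rw [h] at this; simp at this
          · exfalso
            have h1 := Finset.mem_Icc.mp (h (Finset.mem_Icc.mpr ⟨le_refl a, hab.le⟩))
            have h2 := Finset.mem_Icc.mp (h (Finset.mem_Icc.mpr ⟨hab.le, le_refl b⟩))
            omega
          · have h1 := Finset.mem_Icc.mp (h (Finset.mem_Icc.mpr ⟨le_refl x, hxy.le⟩))
            have h2 := Finset.mem_Icc.mp (h (Finset.mem_Icc.mpr ⟨hxy.le, le_refl y⟩))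
            have hxZ : x ∈ Z := hsub L hLσ hxL
            have hyZ : y ∈ Z := hsub L hLσ hyL
            have hxa : x ≠ a := fun he => hLM (hblock a haZ L hLσ M hMσ (he ▸ hxL) haM)
            have hxb : x ≠ b := fun he => hLM (hblock b hbZ L hLσ M hMσ (he ▸ hxL) hbM)
            have hya : y ≠ a := fun he => hLM (hblock a haZ L hLσ M hMσ (he ▸ hyL) haM)
            have hyb : y ≠ b := fun he => hLM (hblock b hbZ L hLσ M hMσ (he ▸ hyL) hbM)
            intro z hz
            rw [hLeq] at hz
            simp only [Finset.mem_insert, Finset.mem_singleton] at hz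
            rw [Finset.mem_Ioo]
            rcases hz with rfl | rfl <;> omega
        · rintro ⟨L, ⟨hLσ, hLsub⟩, hcL⟩
          exact ⟨hsub L hLσ hcL, hLsub hcL⟩
      have hdisj : ∀ L ∈ T, ∀ L' ∈ T, L ≠ L' → Disjoint L L' := by
        intro L hL L' hL' hne'
        rw [Finset.disjoint_left]
        intro c hcL hcL'
        rw [hTdef, Finset.mem_filter] at hL hL'
        exact hne' (hblock c (hsub L hL.1 hcL) L hL.1 L' hL'.1 hcL hcL')
      have hcard2 : ∀ L ∈ T, L.card = 2 := by
        intro L hL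
        rw [hTdef, Finset.mem_filter] at hL
        have hLM0 : L ≠ M0 := by
          intro h
          have hdL : d ∈ L := by rw [h, hM0eq]; simp
          have := Finset.mem_Ioo.mp (hL.2 hdL)
          omega
        obtain ⟨x, y, hxy, hLeq, -⟩ := hpairs L hL.1 hLM0
        rw [hLeq]
        exact Finset.card_pair (by omega)
      have : S.card = 2 * T.card := by
        rw [hST, Finset.card_biUnion hdisj]
        rw [Finset.sum_congr rfl hcard2, Finset.sum_const, smul_eq_mul, mul_comm]
      omega
    -- S has odd cardinality: parity counting over F
    have hodd : S.card % 2 = 1 := by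
      classical
      have hSF : S = F.biUnion (fun m => ({2 * m, 2 * m + 1} : Finset ℕ) ∩ Finset.Ioo a b) := by
        ext c
        simp only [hSdef, hZdef, Finset.mem_inter, Finset.mem_insert, Finset.mem_biUnion,
          Finset.mem_singleton, Finset.mem_Ioo]
        constructor
        · rintro ⟨h1 | ⟨m, hm, hc⟩, h2⟩
          · omega
          · exact ⟨m, hm, hc, h2⟩
        · rintro ⟨m, hm, hc, h2⟩
          exact ⟨Or.inr ⟨m, hm, hc⟩, h2⟩
      have hdisj : ∀ m ∈ F, ∀ m' ∈ F, m ≠ m' →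
          Disjoint (({2 * m, 2 * m + 1} : Finset ℕ) ∩ Finset.Ioo a b)
            (({2 * m', 2 * m' + 1} : Finset ℕ) ∩ Finset.Ioo a b) := by
        intro m _ m' _ hne'
        rw [Finset.disjoint_left]
        intro c hc hc'
        simp only [Finset.mem_inter, Finset.mem_insert, Finset.mem_singleton] at hc hc'
        omega
      have hterm : ∀ m : ℕ, (({2 * m, 2 * m + 1} : Finset ℕ) ∩ Finset.Ioo a b).card =
          (if a < 2 * m ∧ 2 * m < b then 1 else 0) +
          (if a < 2 * m + 1 ∧ 2 * m + 1 < b then 1 else 0) := by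
        intro m
        by_cases h1 : a < 2 * m ∧ 2 * m < b <;> by_cases h2 : a < 2 * m + 1 ∧ 2 * m + 1 < b <;>
          simp only [h1, h2, if_true, if_false]
        · have : ({2 * m, 2 * m + 1} : Finset ℕ) ∩ Finset.Ioo a b = {2 * m, 2 * m + 1} := by
            ext c
            simp only [Finset.mem_inter, Finset.mem_insert, Finset.mem_singleton,
              Finset.mem_Ioo]
            omega
          rw [this]; exact Finset.card_pair (by omega)
        · have : ({2 * m, 2 * m + 1} : Finset ℕ) ∩ Finset.Ioo a b = {2 * m} := by
            ext c
            simp only [Finset.mem_inter, Finset.mem_insert, Finset.mem_singleton,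
              Finset.mem_Ioo]
            omega
          rw [this]; simp
        · have : ({2 * m, 2 * m + 1} : Finset ℕ) ∩ Finset.Ioo a b = {2 * m + 1} := by
            ext c
            simp only [Finset.mem_inter, Finset.mem_insert, Finset.mem_singleton,
              Finset.mem_Ioo]
            omega
          rw [this]; simp
        · have : ({2 * m, 2 * m + 1} : Finset ℕ) ∩ Finset.Ioo a b = ∅ := by
            ext c
            simp only [Finset.mem_inter, Finset.mem_insert, Finset.mem_singleton,
              Finset.mem_Ioo, Finset.notMem_empty, iff_false]
            omega
          rw [this]; simp
      -- find the special index
      have hspec : ∃ s ∈ F,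
          (({2 * s, 2 * s + 1} : Finset ℕ) ∩ Finset.Ioo a b).card = 1 ∧
          ∀ m, m ≠ s → (({2 * m, 2 * m + 1} : Finset ℕ) ∩ Finset.Ioo a b).card % 2 = 0 := by
        rcases Nat.even_or_odd a with hae | hao
        · -- a, b both even
          have ha2 : a % 2 = 0 := Nat.even_iff.mp hae
          obtain ⟨p, hp, hpa⟩ : ∃ p ∈ F, a = 2 * p := by
            rcases hZmem a haZ with h | ⟨m, hm, h | h⟩
            · omega
            · exact ⟨m, hm, h⟩
            · omega
          obtain ⟨q, hq, hqb⟩ : ∃ q ∈ F, b = 2 * q := by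
            rcases hZmem b hbZ with h | ⟨m, hm, h | h⟩
            · omega
            · exact ⟨m, hm, h⟩
            · omega
          refine ⟨p, hp, ?_, ?_⟩
          · rw [hterm]
            rw [if_neg (by omega), if_pos (by omega)]
          · intro m hm
            rw [hterm]
            by_cases hc : a < 2 * m ∧ 2 * m < b
            · rw [if_pos hc, if_pos (by omega)]
            · rw [if_neg hc, if_neg (by omega)]
        · -- a, b both odd
          have ha2 : a % 2 = 1 := Nat.odd_iff.mp hao
          obtain ⟨q, hq, hqb⟩ : ∃ q ∈ F, b = 2 * q + 1 := by
            rcases hZmem b hbZ with h | ⟨m, hm, h | h⟩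
            · omega
            · omega
            · exact ⟨m, hm, h⟩
          refine ⟨q, hq, ?_, ?_⟩
          · rw [hterm]
            rw [if_pos (by omega), if_neg (by omega)]
          · intro m hm
            rw [hterm]
            by_cases hc : a < 2 * m ∧ 2 * m < b
            · rw [if_pos hc, if_pos (by omega)]
            · rw [if_neg hc, if_neg (by omega)]
      obtain ⟨s, hsF, hs1, hsrest⟩ := hspec
      have hsum : S.card = (({2 * s, 2 * s + 1} : Finset ℕ) ∩ Finset.Ioo a b).card +
          ∑ m ∈ F.erase s, (({2 * m, 2 * m + 1} : Finset ℕ) ∩ Finset.Ioo a b).card := by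
        rw [hSF, Finset.card_biUnion hdisj]
        exact (Finset.add_sum_erase F
          (fun m => (({2 * m, 2 * m + 1} : Finset ℕ) ∩ Finset.Ioo a b).card) hsF).symm
      have hrest : (∑ m ∈ F.erase s,
          (({2 * m, 2 * m + 1} : Finset ℕ) ∩ Finset.Ioo a b).card) % 2 = 0 := by
        rw [Finset.sum_nat_mod,
          Finset.sum_eq_zero (fun m hm => hsrest m (Finset.mem_erase.mp hm).1)]
        rfl
      omega
    omega
  rcases Nat.even_or_odd a with hae | hao
  · exact ⟨a, b, hae, Nat.odd_iff.mpr (by have := Nat.even_iff.mp hae; omega), hMeq⟩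
  · refine ⟨b, a, ?_, hao, by rw [hMeq, Finset.pair_comm]⟩
    exact Nat.even_iff.mpr (by have := Nat.odd_iff.mp hao; omega)
end

section
/- Let 1 ≤ m_1 < … < m_e be indices and Z = {1} ∪ {2m_i, 2m_i+1 : 1 ≤ i ≤ e}. If σ and σ' are two Temperley–Lieb patterns of Z having the same collection of blocks of the form {c, d} with c even, d odd and c < d, then σ = σ'. In other words, a TL pattern of Z is uniquely determined by its blocks whose smaller element is even and whose larger element is odd. -/
def Zf (F : Finset ℕ) : Finset ℕ := insert 1 (F.biUnion fun m => ({2*m, 2*m+1} : Finset ℕ))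

lemma mem_Zf {F : Finset ℕ} {x : ℕ} :
    x ∈ Zf F ↔ x = 1 ∨ ∃ m ∈ F, x = 2*m ∨ x = 2*m+1 := by
  simp [Zf]

lemma Zf_one_le {F : Finset ℕ} (hF : ∀ m ∈ F, 1 ≤ m) {x : ℕ} (hx : x ∈ Zf F) : 1 ≤ x := by
  rw [mem_Zf] at hx
  rcases hx with rfl | ⟨m, hm, rfl | rfl⟩
  · omega
  · have := hF m hm; omega
  · omega

lemma Zf_even_succ {F : Finset ℕ} {c : ℕ} (hc : c ∈ Zf F) (h2 : c % 2 = 0) : c + 1 ∈ Zf F := by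
  rw [mem_Zf] at hc ⊢
  rcases hc with rfl | ⟨m, hm, rfl | rfl⟩
  · omega
  · exact Or.inr ⟨m, hm, Or.inr rfl⟩
  · omega

lemma Zf_odd_pred {F : Finset ℕ} {b : ℕ} (hb : b ∈ Zf F) (h2 : b % 2 = 1) (hb1 : b ≠ 1) :
    b - 1 ∈ Zf F := by
  rw [mem_Zf] at hb ⊢
  rcases hb with rfl | ⟨m, hm, rfl | rfl⟩
  · omega
  · omega
  · exact Or.inr ⟨m, hm, Or.inl (by omega)⟩

lemma Zf_card_parity (F : Finset ℕ) (hF : ∀ m ∈ F, 1 ≤ m) :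
    ∀ b, b ∈ Zf F → ∀ a, a ∈ Zf F → a ≤ b →
      ((Zf F) ∩ Finset.Icc a b).card % 2 = (a + b + 1) % 2 := by
  intro b
  induction b using Nat.strong_induction_on with
  | _ b ih =>
  intro hb a ha hab
  rcases eq_or_lt_of_le hab with rfl | hlt
  · have h1 : (Zf F) ∩ Finset.Icc a a = {a} := by
      ext x
      simp only [Finset.mem_inter, Finset.mem_Icc, Finset.mem_singleton]
      constructor
      · rintro ⟨-, h1, h2⟩; omega
      · rintro rfl; exact ⟨ha, le_rfl, le_rfl⟩
    rw [h1, Finset.card_singleton]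
    omega
  · have ha1 : 1 ≤ a := Zf_one_le hF ha
    rcases Nat.mod_two_eq_zero_or_one b with hb2 | hb2
    · -- b even
      have hTne : a ∈ Zf F ∩ Finset.Icc a (b-1) := by
        rw [Finset.mem_inter, Finset.mem_Icc]
        exact ⟨ha, le_rfl, by omega⟩
      have hne : (Zf F ∩ Finset.Icc a (b-1)).Nonempty := ⟨a, hTne⟩
      set c := (Zf F ∩ Finset.Icc a (b-1)).max' hne with hcdef
      have hcT := (Zf F ∩ Finset.Icc a (b-1)).max'_mem hne
      rw [Finset.mem_inter, Finset.mem_Icc] at hcT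
      obtain ⟨hcZ, hac, hcb⟩ := hcT
      have hcmax : ∀ x ∈ Zf F ∩ Finset.Icc a (b-1), x ≤ c := fun x hx =>
        Finset.le_max' _ x hx
      have hcodd : c % 2 = 1 := by
        rcases Nat.mod_two_eq_zero_or_one c with h0 | h1
        · exfalso
          have h1 := Zf_even_succ hcZ h0
          have hmem : c + 1 ∈ Zf F ∩ Finset.Icc a (b-1) := by
            rw [Finset.mem_inter, Finset.mem_Icc]
            exact ⟨h1, by omega, by omega⟩
          have := hcmax _ hmem; omega
        · exact h1
      have hdecomp : Zf F ∩ Finset.Icc a b = insert b (Zf F ∩ Finset.Icc a c) := by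
        ext x
        simp only [Finset.mem_inter, Finset.mem_Icc, Finset.mem_insert]
        constructor
        · rintro ⟨hx, h1, h2⟩
          by_cases hxb : x = b
          · exact Or.inl hxb
          · right
            refine ⟨hx, h1, ?_⟩
            have hmem : x ∈ Zf F ∩ Finset.Icc a (b-1) := by
              rw [Finset.mem_inter, Finset.mem_Icc]
              exact ⟨hx, h1, by omega⟩
            exact hcmax _ hmem
        · rintro (rfl | ⟨hx, h1, h2⟩)
          · exact ⟨hb, hab, le_rfl⟩
          · exact ⟨hx, h1, by omega⟩
      have hbnot : b ∉ Zf F ∩ Finset.Icc a c := by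
        rw [Finset.mem_inter, Finset.mem_Icc]
        rintro ⟨-, -, hle⟩
        omega
      have hcard : (Zf F ∩ Finset.Icc a b).card = (Zf F ∩ Finset.Icc a c).card + 1 := by
        rw [hdecomp, Finset.card_insert_of_notMem hbnot]
      have hih := ih c (by omega) hcZ a ha hac
      omega
    · -- b odd
      have hb1 : b ≠ 1 := by omega
      have hbm1 : b - 1 ∈ Zf F := Zf_odd_pred hb hb2 hb1
      by_cases hab2 : b - 1 ≤ a
      · have hset : Zf F ∩ Finset.Icc a b = {b - 1, b} := by
          ext x
          simp only [Finset.mem_inter, Finset.mem_Icc, Finset.mem_insert, Finset.mem_singleton]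
          constructor
          · rintro ⟨hx, h1, h2⟩; omega
          · rintro (rfl | rfl)
            · exact ⟨hbm1, by omega, by omega⟩
            · exact ⟨hb, by omega, le_rfl⟩
        rw [hset, Finset.card_insert_of_notMem (by simp; omega), Finset.card_singleton]
        omega
      · have hale : a ≤ b - 2 := by omega
        have hTne : a ∈ Zf F ∩ Finset.Icc a (b-2) := by
          rw [Finset.mem_inter, Finset.mem_Icc]
          exact ⟨ha, le_rfl, hale⟩
        have hne : (Zf F ∩ Finset.Icc a (b-2)).Nonempty := ⟨a, hTne⟩
        set c := (Zf F ∩ Finset.Icc a (b-2)).max' hne with hcdef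
        have hcT := (Zf F ∩ Finset.Icc a (b-2)).max'_mem hne
        rw [Finset.mem_inter, Finset.mem_Icc] at hcT
        obtain ⟨hcZ, hac, hcb⟩ := hcT
        have hcmax : ∀ x ∈ Zf F ∩ Finset.Icc a (b-2), x ≤ c := fun x hx =>
          Finset.le_max' _ x hx
        have hcodd : c % 2 = 1 := by
          rcases Nat.mod_two_eq_zero_or_one c with h0 | h1
          · exfalso
            have h1 := Zf_even_succ hcZ h0
            have hmem : c + 1 ∈ Zf F ∩ Finset.Icc a (b-2) := by
              rw [Finset.mem_inter, Finset.mem_Icc]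
              exact ⟨h1, by omega, by omega⟩
            have := hcmax _ hmem; omega
          · exact h1
        have hdecomp : Zf F ∩ Finset.Icc a b =
            insert (b-1) (insert b (Zf F ∩ Finset.Icc a c)) := by
          ext x
          simp only [Finset.mem_inter, Finset.mem_Icc, Finset.mem_insert]
          constructor
          · rintro ⟨hx, h1, h2⟩
            by_cases hx1 : x = b - 1
            · exact Or.inl hx1
            by_cases hxb : x = b
            · exact Or.inr (Or.inl hxb)
            right; right
            refine ⟨hx, h1, ?_⟩
            have hmem : x ∈ Zf F ∩ Finset.Icc a (b-2) := by
              rw [Finset.mem_inter, Finset.mem_Icc]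
              exact ⟨hx, h1, by omega⟩
            exact hcmax _ hmem
          · rintro (rfl | rfl | ⟨hx, h1, h2⟩)
            · exact ⟨hbm1, by omega, by omega⟩
            · exact ⟨hb, by omega, le_rfl⟩
            · exact ⟨hx, h1, by omega⟩
        have hb_not : b ∉ Zf F ∩ Finset.Icc a c := by
          rw [Finset.mem_inter, Finset.mem_Icc]
          rintro ⟨-, -, hle⟩; omega
        have hbm1_not : b - 1 ∉ insert b (Zf F ∩ Finset.Icc a c) := by
          rw [Finset.mem_insert, Finset.mem_inter, Finset.mem_Icc]
          rintro (h | ⟨-, -, hle⟩) <;> omega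
        have hcard : (Zf F ∩ Finset.Icc a b).card = (Zf F ∩ Finset.Icc a c).card + 2 := by
          rw [hdecomp, Finset.card_insert_of_notMem hbm1_not,
            Finset.card_insert_of_notMem hb_not]
        have hih := ih c (by omega) hcZ a ha hac
        omega

lemma pair_eq {a b u v : ℕ} (hab : a < b) (huv : u < v)
    (h : ({a, b} : Finset ℕ) = ({u, v} : Finset ℕ)) : a = u ∧ b = v := by
  have h' : ∀ x : ℕ, x = a ∨ x = b ↔ x = u ∨ x = v := by
    intro x
    have := Finset.ext_iff.mp h x
    simpa using this
  have h1 := h' a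
  have h2 := h' b
  have h3 := h' u
  have h4 := h' v
  omega

lemma block_unique {Z : Finset ℕ} {σ : Finset (Finset ℕ)} (hp : IsPartitionOf Z σ)
    {L L' : Finset ℕ} (hL : L ∈ σ) (hL' : L' ∈ σ) {x : ℕ} (hx : x ∈ L) (hx' : x ∈ L') :
    L = L' := by
  obtain ⟨K, -, hK⟩ := hp.2.2 x (hp.2.1 L hL hx)
  rw [hK L ⟨hL, hx⟩, hK L' ⟨hL', hx'⟩]

lemma block_parity (F : Finset ℕ) (hF : ∀ m ∈ F, 1 ≤ m) (σ : Finset (Finset ℕ))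
    (h1 : IsTLPattern (Zf F) σ) :
    ∀ M ∈ σ, ∀ a b : ℕ, a < b → M = ({a, b} : Finset ℕ) → (a + b) % 2 = 1 := by
  classical
  obtain ⟨hp, hnc, M0, hM0, d, hd, hM0eq, hpair⟩ := h1
  intro M hM a b hab hMab
  subst hMab
  have hMne : ({a, b} : Finset ℕ) ≠ M0 := by
    intro hEq
    rw [hM0eq] at hEq
    have hA : a ∈ ({d} : Finset ℕ) := by rw [← hEq]; simp
    have hB : b ∈ ({d} : Finset ℕ) := by rw [← hEq]; simp
    simp only [Finset.mem_singleton] at hA hB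
    omega
  obtain ⟨a', b', hab', hM', hside'⟩ := hpair _ hM hMne
  have h12 := pair_eq hab hab' hM'
  have hside : b < d ∨ d < a := by
    obtain ⟨e1, e2⟩ := h12
    omega
  have haZ : a ∈ Zf F := hp.2.1 _ hM (by simp)
  have hbZ : b ∈ Zf F := hp.2.1 _ hM (by simp)
  have hkey : Zf F ∩ Finset.Icc a b = (σ.filter fun L => L ⊆ Finset.Icc a b).biUnion id := by
    ext x
    simp only [Finset.mem_inter, Finset.mem_biUnion, Finset.mem_filter, id_eq]
    constructor
    · rintro ⟨hxZ, hxI⟩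
      rw [Finset.mem_Icc] at hxI
      obtain ⟨L, ⟨hLσ, hxL⟩, -⟩ := hp.2.2 x hxZ
      refine ⟨L, ⟨hLσ, ?_⟩, hxL⟩
      by_cases hLM : L = ({a, b} : Finset ℕ)
      · subst hLM
        intro y hy
        simp only [Finset.mem_insert, Finset.mem_singleton] at hy
        rw [Finset.mem_Icc]
        omega
      · have hLM0 : L ≠ M0 := by
          rintro rfl
          rw [hM0eq] at hxL
          simp only [Finset.mem_singleton] at hxL
          omega
        obtain ⟨u, v, huv, hLuv, -⟩ := hpair L hLσ hLM0
        subst hLuv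
        have hxuv : x = u ∨ x = v := by simpa using hxL
        rcases hnc _ hM _ hLσ (Ne.symm hLM) a (by simp) b (by simp) u (by simp) v (by simp)
            hab.le huv.le with h0 | h0 | h0
        · exfalso
          have hmem : x ∈ Finset.Icc a b ∩ Finset.Icc u v := by
            rw [Finset.mem_inter, Finset.mem_Icc, Finset.mem_Icc]
            omega
          rw [h0] at hmem
          simp at hmem
        · exfalso
          have hua := h0 (Finset.mem_Icc.mpr ⟨le_rfl, hab.le⟩)
          have hubb := h0 (Finset.mem_Icc.mpr ⟨hab.le, le_rfl⟩)
          rw [Finset.mem_Icc] at hua hubb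
          rcases hxuv with rfl | rfl
          · have hau : a = x := by omega
            exact hLM (block_unique hp hLσ hM (x := a)
              (by rw [Finset.mem_insert, Finset.mem_singleton]; omega) (by simp))
          · have hbv : b = x := by omega
            exact hLM (block_unique hp hLσ hM (x := b)
              (by rw [Finset.mem_insert, Finset.mem_singleton]; omega) (by simp))
        · intro y hy
          apply h0
          simp only [Finset.mem_insert, Finset.mem_singleton] at hy
          rw [Finset.mem_Icc]
          omega
    · rintro ⟨L, ⟨hLσ, hLI⟩, hxL⟩
      exact ⟨hp.2.1 L hLσ hxL, hLI hxL⟩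
  have hdisj : ∀ L ∈ σ.filter (fun L => L ⊆ Finset.Icc a b),
      ∀ L' ∈ σ.filter (fun L => L ⊆ Finset.Icc a b), L ≠ L' → Disjoint (id L) (id L') := by
    intro L hL L' hL' hne
    rw [Finset.mem_filter] at hL hL'
    rw [Finset.disjoint_left]
    intro x hx hx'
    exact hne (block_unique hp hL.1 hL'.1 hx hx')
  have hcard2 : ∀ L ∈ σ.filter (fun L => L ⊆ Finset.Icc a b), (id L).card = 2 := by
    intro L hL
    rw [Finset.mem_filter] at hL
    have hLM0 : L ≠ M0 := by
      rintro rfl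
      have hdm : d ∈ Finset.Icc a b := hL.2 (by rw [hM0eq]; simp)
      rw [Finset.mem_Icc] at hdm
      omega
    obtain ⟨u, v, huv, hLuv, -⟩ := hpair L hL.1 hLM0
    rw [id_eq, hLuv, Finset.card_insert_of_notMem (by simp; omega), Finset.card_singleton]
  have hsum : (Zf F ∩ Finset.Icc a b).card
      = (σ.filter fun L => L ⊆ Finset.Icc a b).card * 2 := by
    rw [hkey, Finset.card_biUnion hdisj, Finset.sum_congr rfl hcard2, Finset.sum_const,
      smul_eq_mul]
  have hpar := Zf_card_parity F hF b hbZ a haZ hab.le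
  omega

lemma restrictTL (Z : Finset ℕ) (σ : Finset (Finset ℕ)) (Q : Finset ℕ → Prop)
    [DecidablePred Q] (hTL : IsTLPattern Z σ) (hQs : ∀ x : ℕ, ¬ Q ({x} : Finset ℕ)) :
    IsTLPattern (Z \ (σ.filter Q).biUnion id) (σ.filter fun M => ¬ Q M) := by
  obtain ⟨⟨hne, hsub, huni⟩, hnc, M0, hM0, d, hd, hM0eq, hpair⟩ := hTL
  refine ⟨⟨?_, ?_, ?_⟩, ?_, M0, ?_, d, hd, hM0eq, ?_⟩
  · intro L hL
    exact hne L (Finset.mem_filter.mp hL).1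
  · intro L hL x hx
    rw [Finset.mem_filter] at hL
    rw [Finset.mem_sdiff]
    refine ⟨hsub L hL.1 hx, ?_⟩
    intro hxb
    rw [Finset.mem_biUnion] at hxb
    obtain ⟨L', hL', hxL'⟩ := hxb
    rw [Finset.mem_filter] at hL'
    have hLL : L = L' := block_unique ⟨hne, hsub, huni⟩ hL.1 hL'.1 hx hxL'
    exact hL.2 (hLL ▸ hL'.2)
  · intro x hx
    rw [Finset.mem_sdiff] at hx
    obtain ⟨L, ⟨hLσ, hxL⟩, hLu⟩ := huni x hx.1
    have hnQ : ¬ Q L := by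
      intro hQL
      exact hx.2 (Finset.mem_biUnion.mpr ⟨L, Finset.mem_filter.mpr ⟨hLσ, hQL⟩, hxL⟩)
    refine ⟨L, ⟨Finset.mem_filter.mpr ⟨hLσ, hnQ⟩, hxL⟩, ?_⟩
    intro y hy
    exact hLu y ⟨(Finset.mem_filter.mp hy.1).1, hy.2⟩
  · intro L hL L' hL'
    exact hnc L (Finset.mem_filter.mp hL).1 L' (Finset.mem_filter.mp hL').1
  · exact Finset.mem_filter.mpr ⟨hM0, by rw [hM0eq]; exact hQs d⟩
  · intro M hM hMne
    exact hpair M (Finset.mem_filter.mp hM).1 hMne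

lemma key_block (R : Finset ℕ) (P : Finset (Finset ℕ)) (hTL : IsTLPattern R P)
    (hB : ∀ M ∈ P, ∀ a b : ℕ, a < b → M = ({a, b} : Finset ℕ) → a % 2 = 1 ∧ b % 2 = 0)
    (c : ℕ) (hcR : c ∈ R) (hc2 : c % 2 = 0) (hcmin : ∀ x ∈ R, x % 2 = 0 → c ≤ x) :
    ∃ o, o < c ∧ o % 2 = 1 ∧ ({o, c} : Finset ℕ) ∈ P ∧
      ∀ y ∈ R, o < y → y < c → False := by
  obtain ⟨hp, hnc, M0, hM0, d, hd, hM0eq, hpair⟩ := hTL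
  have hd2 : d % 2 = 1 := Nat.odd_iff.mp hd
  obtain ⟨L, ⟨hLP, hcL⟩, -⟩ := hp.2.2 c hcR
  have hLM0 : L ≠ M0 := by
    rintro rfl
    rw [hM0eq] at hcL
    simp only [Finset.mem_singleton] at hcL
    omega
  obtain ⟨o, b, hob, hLob, hside⟩ := hpair L hLP hLM0
  obtain ⟨ho2, hb2⟩ := hB L hLP o b hob hLob
  subst hLob
  have hcb : c = b := by
    simp only [Finset.mem_insert, Finset.mem_singleton] at hcL
    omega
  subst hcb
  refine ⟨o, hob, ho2, hLP, ?_⟩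
  intro y hyR hy1 hy2
  obtain ⟨Ly, ⟨hLyP, hyLy⟩, -⟩ := hp.2.2 y hyR
  by_cases hLyL : Ly = ({o, c} : Finset ℕ)
  · rw [hLyL] at hyLy
    simp only [Finset.mem_insert, Finset.mem_singleton] at hyLy
    omega
  by_cases hLyM0 : Ly = M0
  · rw [hLyM0, hM0eq] at hyLy
    simp only [Finset.mem_singleton] at hyLy
    rcases hside with hs | hs <;> omega
  obtain ⟨o', c', hoc', hLy_eq, hside'⟩ := hpair Ly hLyP hLyM0
  obtain ⟨ho2', hc2'⟩ := hB Ly hLyP o' c' hoc' hLy_eq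
  subst hLy_eq
  have hyoc : y = o' ∨ y = c' := by simpa using hyLy
  rcases hnc _ hLP _ hLyP (Ne.symm hLyL) o (by simp) c (by simp) o' (by simp) c' (by simp)
      hob.le hoc'.le with h0 | h0 | h0
  · have hmem : y ∈ Finset.Icc o c ∩ Finset.Icc o' c' := by
      rw [Finset.mem_inter, Finset.mem_Icc, Finset.mem_Icc]
      omega
    rw [h0] at hmem
    simp at hmem
  · have h1 := h0 (Finset.mem_Icc.mpr ⟨le_rfl, hob.le⟩)
    have h2 := h0 (Finset.mem_Icc.mpr ⟨hob.le, le_rfl⟩)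
    rw [Finset.mem_Icc] at h1 h2
    omega
  · have h2 := h0 (Finset.mem_Icc.mpr ⟨hoc'.le, le_rfl⟩)
    rw [Finset.mem_Icc] at h2
    have hc'R : c' ∈ R := hp.2.1 _ hLyP (by simp)
    have hge := hcmin c' hc'R hc2'
    apply hLyL
    exact block_unique hp hLyP hLP (x := c)
      (by rw [Finset.mem_insert, Finset.mem_singleton]; omega) (by simp)

lemma no_even (R : Finset ℕ) (P : Finset (Finset ℕ)) (hTL : IsTLPattern R P)
    (hB : ∀ M ∈ P, ∀ a b : ℕ, a < b → M = ({a, b} : Finset ℕ) → a % 2 = 1 ∧ b % 2 = 0)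
    (hE : ∀ x ∈ R, x % 2 = 1) : P = {R} := by
  obtain ⟨hp, hnc, M0, hM0, d, hd, hM0eq, hpair⟩ := hTL
  have hall : ∀ L ∈ P, L = M0 := by
    intro L hL
    by_contra hne
    obtain ⟨u, v, huv, hLuv, -⟩ := hpair L hL hne
    have hv2 := (hB L hL u v huv hLuv).2
    have hvR : v ∈ R := hp.2.1 L hL (hLuv ▸ by simp)
    have := hE v hvR
    omega
  have hRM0 : R = M0 := by
    apply Finset.Subset.antisymm
    · intro x hx
      obtain ⟨L, ⟨hLP, hxL⟩, -⟩ := hp.2.2 x hx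
      rwa [hall L hLP] at hxL
    · exact hp.2.1 M0 hM0
  ext L
  simp only [Finset.mem_singleton]
  constructor
  · intro hL
    rw [hall L hL, ← hRM0]
  · rintro rfl
    rwa [hRM0]

lemma uniqueTLB : ∀ (n : ℕ) (R : Finset ℕ) (P P' : Finset (Finset ℕ)),
    R.card ≤ n → IsTLPattern R P → IsTLPattern R P' →
    (∀ M ∈ P, ∀ a b : ℕ, a < b → M = ({a, b} : Finset ℕ) → a % 2 = 1 ∧ b % 2 = 0) →
    (∀ M ∈ P', ∀ a b : ℕ, a < b → M = ({a, b} : Finset ℕ) → a % 2 = 1 ∧ b % 2 = 0) →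
    P = P' := by
  intro n
  induction n with
  | zero =>
    intro R P P' hcard hTL hTL' hB hB'
    exfalso
    obtain ⟨hp, -, M0, hM0, d, -, hM0eq, -⟩ := hTL
    have hdR : d ∈ R := hp.2.1 M0 hM0 (hM0eq ▸ by simp)
    have := Finset.card_pos.mpr ⟨d, hdR⟩
    omega
  | succ n ihn =>
    intro R P P' hcard hTL hTL' hB hB'
    classical
    by_cases hE : ∃ x ∈ R, x % 2 = 0
    · obtain ⟨x0, hx0R, hx02⟩ := hE
      have hVne : (R.filter (fun x => x % 2 = 0)).Nonempty :=
        ⟨x0, Finset.mem_filter.mpr ⟨hx0R, hx02⟩⟩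
      have hex : ∃ c, (c ∈ R ∧ c % 2 = 0) ∧ ∀ x ∈ R, x % 2 = 0 → c ≤ x := by
        refine ⟨(R.filter (fun x => x % 2 = 0)).min' hVne, ?_, ?_⟩
        · have hm := Finset.min'_mem _ hVne
          rw [Finset.mem_filter] at hm
          exact hm
        · intro x hx h2
          exact Finset.min'_le (R.filter (fun y => y % 2 = 0)) x
            (Finset.mem_filter.mpr ⟨hx, h2⟩)
      obtain ⟨c, ⟨hcR, hc2⟩, hcmin⟩ := hex
      obtain ⟨o, hoc, ho2, hLP, hgap⟩ := key_block R P hTL hB c hcR hc2 hcmin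
      obtain ⟨o', hoc', ho2', hLP', hgap'⟩ := key_block R P' hTL' hB' c hcR hc2 hcmin
      have hoo : o = o' := by
        rcases lt_trichotomy o o' with hlt | heq | hlt
        · exact absurd (hgap o' (hTL'.1.2.1 _ hLP' (by simp)) hlt hoc') (by simp)
        · exact heq
        · exact absurd (hgap' o (hTL.1.2.1 _ hLP (by simp)) hlt hoc) (by simp)
      subst hoo
      have hrem : ∀ (Q : Finset (Finset ℕ)), IsTLPattern R Q → ({o, c} : Finset ℕ) ∈ Q →
          IsTLPattern ((R.erase o).erase c) (Q.erase ({o, c} : Finset ℕ)) := by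
        intro Q hQ hocQ
        obtain ⟨⟨hne, hsub, huni⟩, hnc, M0, hM0, d, hd, hM0eq, hpair⟩ := hQ
        have hM0ne : M0 ≠ ({o, c} : Finset ℕ) := by
          rw [hM0eq]
          intro hEq
          have h1 : o ∈ ({d} : Finset ℕ) := by rw [hEq]; simp
          have h2 : c ∈ ({d} : Finset ℕ) := by rw [hEq]; simp
          simp only [Finset.mem_singleton] at h1 h2
          omega
        refine ⟨⟨?_, ?_, ?_⟩, ?_, M0, ?_, d, hd, hM0eq, ?_⟩
        · intro L hL
          exact hne L (Finset.mem_of_mem_erase hL)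
        · intro L hL x hx
          have hLQ := Finset.mem_of_mem_erase hL
          have hLne := (Finset.mem_erase.mp hL).1
          have hxR := hsub L hLQ hx
          rw [Finset.mem_erase, Finset.mem_erase]
          refine ⟨?_, ?_, hxR⟩
          · intro heq
            subst heq
            exact hLne (block_unique ⟨hne, hsub, huni⟩ hLQ hocQ hx (by simp))
          · intro heq
            subst heq
            exact hLne (block_unique ⟨hne, hsub, huni⟩ hLQ hocQ hx (by simp))
        · intro x hx
          rw [Finset.mem_erase, Finset.mem_erase] at hx
          obtain ⟨hxc, hxo, hxR⟩ := hx
          obtain ⟨L, ⟨hLQ, hxL⟩, hLu⟩ := huni x hxR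
          have hLne : L ≠ ({o, c} : Finset ℕ) := by
            rintro rfl
            simp only [Finset.mem_insert, Finset.mem_singleton] at hxL
            rcases hxL with h | h
            · exact hxo h
            · exact hxc h
          refine ⟨L, ⟨Finset.mem_erase.mpr ⟨hLne, hLQ⟩, hxL⟩, ?_⟩
          intro y hy
          exact hLu y ⟨Finset.mem_of_mem_erase hy.1, hy.2⟩
        · intro L hL L' hL'
          exact hnc L (Finset.mem_of_mem_erase hL) L' (Finset.mem_of_mem_erase hL')
        · exact Finset.mem_erase.mpr ⟨hM0ne, hM0⟩
        · intro M hM hMne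
          exact hpair M (Finset.mem_of_mem_erase hM) hMne
      have h2 := hrem P hTL hLP
      have h2' := hrem P' hTL' hLP'
      have hoR : o ∈ R := hTL.1.2.1 _ hLP (by simp)
      have hcardlt : ((R.erase o).erase c).card ≤ n := by
        have ha1 : (R.erase o).card < R.card := Finset.card_erase_lt_of_mem hoR
        have ha2 : ((R.erase o).erase c).card ≤ (R.erase o).card := Finset.card_erase_le
        omega
      have hind := ihn _ _ _ hcardlt h2 h2'
        (fun M hM => hB M (Finset.mem_of_mem_erase hM))
        (fun M hM => hB' M (Finset.mem_of_mem_erase hM))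
      calc P = insert ({o, c} : Finset ℕ) (P.erase ({o, c} : Finset ℕ)) :=
            (Finset.insert_erase hLP).symm
        _ = insert ({o, c} : Finset ℕ) (P'.erase ({o, c} : Finset ℕ)) := by rw [hind]
        _ = P' := Finset.insert_erase hLP'
    · push_neg at hE
      have hE' : ∀ x ∈ R, x % 2 = 1 := fun x hx => by have := hE x hx; omega
      rw [no_even R P hTL hB hE', no_even R P' hTL' hB' hE']

def QA (M : Finset ℕ) : Prop := ∃ c d, Even c ∧ Odd d ∧ c < d ∧ M = ({c, d} : Finset ℕ)

/-- A Temperley–Lieb pattern of `Z = {1} ∪ {2mᵢ, 2mᵢ+1}` is uniquely determined by its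
blocks whose smaller element is even and whose larger element is odd. -/
theorem stmt12 (F : Finset ℕ) (hF : ∀ m ∈ F, 1 ≤ m)
    (σ σ' : Finset (Finset ℕ))
    (h1 : IsTLPattern (insert 1 (F.biUnion (fun m => ({2 * m, 2 * m + 1} : Finset ℕ)))) σ)
    (h2 : IsTLPattern (insert 1 (F.biUnion (fun m => ({2 * m, 2 * m + 1} : Finset ℕ)))) σ')
    (h : {M : Finset ℕ | M ∈ σ ∧ ∃ c d, Even c ∧ Odd d ∧ c < d ∧ M = ({c, d} : Finset ℕ)} =
         {M : Finset ℕ | M ∈ σ' ∧ ∃ c d, Even c ∧ Odd d ∧ c < d ∧ M = ({c, d} : Finset ℕ)}) :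
    σ = σ' := by
  classical
  have h1' : IsTLPattern (Zf F) σ := h1
  have h2' : IsTLPattern (Zf F) σ' := h2
  have hbp := block_parity F hF σ h1'
  have hbp' := block_parity F hF σ' h2'
  have hQs : ∀ x : ℕ, ¬ QA ({x} : Finset ℕ) := by
    rintro x ⟨u, v, hu, hv, huv, hEq⟩
    have hA : u ∈ ({x} : Finset ℕ) := by rw [hEq]; simp
    have hB : v ∈ ({x} : Finset ℕ) := by rw [hEq]; simp
    simp only [Finset.mem_singleton] at hA hB
    omega
  have hQiff : ∀ M, (M ∈ σ ∧ QA M) ↔ (M ∈ σ' ∧ QA M) := by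
    intro M
    have := Set.ext_iff.mp h M
    simpa [QA] using this
  have hAeq : σ.filter QA = σ'.filter QA := by
    ext M
    rw [Finset.mem_filter, Finset.mem_filter]
    exact hQiff M
  have hT1 := restrictTL (Zf F) σ QA h1' hQs
  have hT2 := restrictTL (Zf F) σ' QA h2' hQs
  rw [← hAeq] at hT2
  have hBc : ∀ (τ : Finset (Finset ℕ)),
      (∀ M ∈ τ, ∀ a b : ℕ, a < b → M = ({a, b} : Finset ℕ) → (a + b) % 2 = 1) →
      ∀ M ∈ τ.filter (fun M => ¬ QA M), ∀ a b : ℕ, a < b → M = ({a, b} : Finset ℕ) →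
        a % 2 = 1 ∧ b % 2 = 0 := by
    intro τ hτ M hM a b hab hMab
    rw [Finset.mem_filter] at hM
    have hpar := hτ M hM.1 a b hab hMab
    rcases Nat.mod_two_eq_zero_or_one a with ha | ha
    · exact absurd ⟨a, b, Nat.even_iff.mpr ha, Nat.odd_iff.mpr (by omega), hab, hMab⟩ hM.2
    · exact ⟨ha, by omega⟩
  have hmain := uniqueTLB ((Zf F \ (σ.filter QA).biUnion id).card) _
    (σ.filter fun M => ¬ QA M) (σ'.filter fun M => ¬ QA M) le_rfl hT1 hT2
    (hBc σ hbp) (hBc σ' hbp')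
  ext M
  constructor
  · intro hM
    by_cases hQM : QA M
    · have hmm : M ∈ σ'.filter QA := by
        rw [← hAeq]
        exact Finset.mem_filter.mpr ⟨hM, hQM⟩
      exact (Finset.mem_filter.mp hmm).1
    · have hmm : M ∈ σ'.filter (fun M => ¬ QA M) := by
        rw [← hmain]
        exact Finset.mem_filter.mpr ⟨hM, hQM⟩
      exact (Finset.mem_filter.mp hmm).1
  · intro hM
    by_cases hQM : QA M
    · have hmm : M ∈ σ.filter QA := by
        rw [hAeq]
        exact Finset.mem_filter.mpr ⟨hM, hQM⟩
      exact (Finset.mem_filter.mp hmm).1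
    · have hmm : M ∈ σ.filter (fun M => ¬ QA M) := by
        rw [hmain]
        exact Finset.mem_filter.mpr ⟨hM, hQM⟩
      exact (Finset.mem_filter.mp hmm).1
end
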